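/- Let b be a smooth divergence-free vector field on ℝ³, j = ∇×b, and f^ε mollification with a standard mollifier. Then ∇×[(∇×b)×b]·b^ε + ∇×[(∇×b)×b]^ε·b = (1/2){div([div(b⊗b)]^ε × b) + div([div(b⊗b)] × b^ε)} + (1/2){div(b⊗j)·b^ε + [div(b⊗b)]·j^ε + div(b⊗j)^ε·b + [div(b⊗b)]^ε·j − div(j⊗b)^ε·b − div(j⊗b)·b^ε}. -/

import Mathlib

open MeasureTheory Real Filter

abbrev V3 := Fin 3 → ℝ

noncomputable def pd (f : V3 → ℝ) (k : Fin 3) (x : V3) : ℝ :=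
  fderiv ℝ f x (Pi.single k 1)

noncomputable def vdiv (F : V3 → V3) (x : V3) : ℝ := ∑ k, pd (fun y => F y k) k x

def cross3 (a b : V3) : V3 :=
  ![a 1 * b 2 - a 2 * b 1, a 2 * b 0 - a 0 * b 2, a 0 * b 1 - a 1 * b 0]

noncomputable def curl3 (F : V3 → V3) (x : V3) : V3 :=
  ![pd (fun y => F y 2) 1 x - pd (fun y => F y 1) 2 x,
    pd (fun y => F y 0) 2 x - pd (fun y => F y 2) 0 x,
    pd (fun y => F y 1) 0 x - pd (fun y => F y 0) 1 x]

def dot3 (a b : V3) : ℝ := ∑ i, a i * b i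

noncomputable def en (x : V3) : ℝ := Real.sqrt (∑ i, x i ^ 2)

noncomputable def mollify (φ : V3 → ℝ) (ε : ℝ) (f : V3 → ℝ) (x : V3) : ℝ :=
  ∫ y, (φ (ε⁻¹ • (x - y)) / ε ^ 3) * f y

noncomputable def molv (φ : V3 → ℝ) (ε : ℝ) (F : V3 → V3) (x : V3) : V3 :=
  fun i => mollify φ ε (fun y => F y i) x

/-- Tensor divergence: div(u⊗v)_i = ∂_k(u_k v_i). -/
noncomputable def tdiv (u v : V3 → V3) (x : V3) : V3 :=
  fun i => ∑ k, pd (fun z => u z k * v z i) k x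


lemma pd_congr {f g : V3 → ℝ} (h : ∀ y, f y = g y) (k x) : pd f k x = pd g k x := by
  have : f = g := funext h
  rw [this]

lemma pd_mul {f g : V3 → ℝ} {x} (hf : DifferentiableAt ℝ f x) (hg : DifferentiableAt ℝ g x) (k) :
    pd (fun y => f y * g y) k x = pd f k x * g x + f x * pd g k x := by
  unfold pd
  rw [fderiv_fun_mul hf hg]
  simp
  ring

lemma pd_add {f g : V3 → ℝ} {x} (hf : DifferentiableAt ℝ f x) (hg : DifferentiableAt ℝ g x) (k) :
    pd (fun y => f y + g y) k x = pd f k x + pd g k x := by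
  unfold pd; rw [fderiv_fun_add hf hg]; simp

lemma pd_sub {f g : V3 → ℝ} {x} (hf : DifferentiableAt ℝ f x) (hg : DifferentiableAt ℝ g x) (k) :
    pd (fun y => f y - g y) k x = pd f k x - pd g k x := by
  unfold pd; rw [fderiv_fun_sub hf hg]; simp

lemma contDiff_pd {f : V3 → ℝ} (hf : ContDiff ℝ (⊤ : ℕ∞) f) (k) : ContDiff ℝ (⊤ : ℕ∞) (fun y => pd f k y) := by
  exact (hf.fderiv_right (by simp)).clm_apply contDiff_const

lemma pd_comm {f : V3 → ℝ} (hf : ContDiff ℝ (⊤ : ℕ∞) f) (i k x) :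
    pd (fun y => pd f i y) k x = pd (fun y => pd f k y) i x := by
  have hd : ∀ y, HasFDerivAt f (fderiv ℝ f y) y := fun y =>
    (hf.differentiable (by simp) y).hasFDerivAt
  have h2 : DifferentiableAt ℝ (fderiv ℝ f) x :=
    ((hf.fderiv_right (m := (⊤ : ℕ∞)) (by simp)).differentiable (by simp)) x
  have hsym := second_derivative_symmetric hd h2.hasFDerivAt (Pi.single k 1) (Pi.single i 1)
  unfold pd
  rw [fderiv_clm_apply h2 (differentiableAt_const _), fderiv_clm_apply h2 (differentiableAt_const _)]
  simp [hsym]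

noncomputable def mker (φ : V3 → ℝ) (ε : ℝ) (z : V3) : ℝ := φ (ε⁻¹ • z) / ε ^ 3

variable {φ : V3 → ℝ} {ε : ℝ}

lemma mker_contDiff (hφ : ContDiff ℝ (⊤ : ℕ∞) φ) : ContDiff ℝ (⊤ : ℕ∞) (mker φ ε) :=
  (hφ.comp (contDiff_const_smul _)).div_const _

lemma mker_hcs (hφc : HasCompactSupport φ) (hε : 0 < ε) : HasCompactSupport (mker φ ε) := by
  have h1 : HasCompactSupport (fun z : V3 => φ (ε⁻¹ • z)) := by
    apply HasCompactSupport.comp_smul hφc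
    positivity
  have h : mker φ ε = (fun z : V3 => φ (ε⁻¹ • z)) * (fun _ => 1 / ε ^ 3) := by
    funext z; simp only [mker, Pi.mul_apply]; ring
  rw [h]
  exact h1.mul_right

lemma mollify_eq (f : V3 → ℝ) (x : V3) :
    mollify φ ε f x = ∫ z, mker φ ε z * f (x - z) := by
  have h : (fun y : V3 => (φ (ε⁻¹ • (x - y)) / ε ^ 3) * f y)
      = (fun y : V3 => (fun z => mker φ ε z * f (x - z)) (x - y)) := by
    funext y; simp [mker]
  calc mollify φ ε f x = ∫ y, (fun z => mker φ ε z * f (x - z)) (x - y) := by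
        unfold mollify; rw [h]
    _ = ∫ z, mker φ ε z * f (x - z) :=
        integral_sub_left_eq_self (fun z => mker φ ε z * f (x - z)) volume x

lemma integrand_integrable (hφ : ContDiff ℝ (⊤ : ℕ∞) φ) (hφc : HasCompactSupport φ) (hε : 0 < ε)
    {f : V3 → ℝ} (hf : Continuous f) (x : V3) :
    Integrable (fun y => (φ (ε⁻¹ • (x - y)) / ε ^ 3) * f y) := by
  have hker : HasCompactSupport (fun y : V3 => mker φ ε (x - y)) := by
    have := (mker_hcs hφc hε).comp_homeomorph
      (Homeomorph.subLeft x)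
    exact this
  have hc : Continuous (fun y : V3 => mker φ ε (x - y) * f y) :=
    (((mker_contDiff hφ).continuous).comp (by continuity)).mul hf
  exact hc.integrable_of_hasCompactSupport hker.mul_right

lemma mollify_sub (hφ : ContDiff ℝ (⊤ : ℕ∞) φ) (hφc : HasCompactSupport φ) (hε : 0 < ε)
    {f g : V3 → ℝ} (hf : Continuous f) (hg : Continuous g) (x : V3) :
    mollify φ ε (fun y => f y - g y) x = mollify φ ε f x - mollify φ ε g x := by
  unfold mollify
  rw [← integral_sub (integrand_integrable hφ hφc hε hf x) (integrand_integrable hφ hφc hε hg x)]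
  congr 1; funext y; ring

lemma mollify_congr {f g : V3 → ℝ} (h : ∀ y, f y = g y) (x : V3) :
    mollify φ ε f x = mollify φ ε g x := by
  have : f = g := funext h
  rw [this]

lemma hasFDerivAt_mollify (hφ : ContDiff ℝ (⊤ : ℕ∞) φ) (hφc : HasCompactSupport φ) (hε : 0 < ε)
    {f : V3 → ℝ} (hf : ContDiff ℝ (⊤ : ℕ∞) f) (x₀ : V3) :
    HasFDerivAt (mollify φ ε f) (∫ z, mker φ ε z • fderiv ℝ f (x₀ - z)) x₀ := by
  have hker := mker_hcs hφc hε
  have hkerc := (mker_contDiff (ε := ε) hφ).continuous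
  -- radius R of support
  obtain ⟨R, hR⟩ := (hker.isBounded).subset_closedBall 0
  -- bound M for fderiv f on large ball
  obtain ⟨M, hM⟩ := (isCompact_closedBall x₀ (1 + R)).exists_bound_of_continuousOn
    ((hf.continuous_fderiv (by simp)).continuousOn (s := Metric.closedBall x₀ (1 + R)))
  have key : HasFDerivAt (fun x => ∫ z, mker φ ε z * f (x - z))
      (∫ z, mker φ ε z • fderiv ℝ f (x₀ - z)) x₀ := by
    apply hasFDerivAt_integral_of_dominated_of_fderiv_le
      (F' := fun (x : V3) (z : V3) => mker φ ε z • fderiv ℝ f (x - z))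
      (bound := fun z => |mker φ ε z| * (|M| + 1)) (Metric.ball_mem_nhds x₀ one_pos)
    · filter_upwards with x
      exact (hkerc.mul (hf.continuous.comp (by continuity))).aestronglyMeasurable
    · have hc : Continuous (fun z => mker φ ε z * f (x₀ - z)) :=
        hkerc.mul (hf.continuous.comp (by continuity))
      exact hc.integrable_of_hasCompactSupport (hker.mul_right)
    · exact (hkerc.smul ((hf.continuous_fderiv (by simp)).comp (by continuity))).aestronglyMeasurable
    · filter_upwards with z
      intro x hx
      by_cases hz : z ∈ tsupport (mker φ ε)
      · have hxz : x - z ∈ Metric.closedBall x₀ (1 + R) := by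
          have h1 : dist x x₀ < 1 := Metric.mem_ball.mp hx
          have h2 : ‖z‖ ≤ R := by
            have := hR hz
            simpa [Metric.mem_closedBall, dist_eq_norm] using this
          have : dist (x - z) x₀ ≤ dist x x₀ + ‖z‖ := by
            rw [dist_eq_norm, dist_eq_norm]
            calc ‖x - z - x₀‖ = ‖(x - x₀) + (-z)‖ := by ring_nf
              _ ≤ ‖x - x₀‖ + ‖(-z : V3)‖ := norm_add_le _ _
              _ = ‖x - x₀‖ + ‖z‖ := by rw [norm_neg]
          simp only [Metric.mem_closedBall]
          linarith
        calc ‖mker φ ε z • fderiv ℝ f (x - z)‖ = |mker φ ε z| * ‖fderiv ℝ f (x - z)‖ := by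
              simp [norm_smul]
          _ ≤ |mker φ ε z| * (|M| + 1) := by
              apply mul_le_mul_of_nonneg_left _ (abs_nonneg _)
              have := hM (x - z) hxz
              have habs : M ≤ |M| := le_abs_self M
              linarith
      · have : mker φ ε z = 0 := image_eq_zero_of_notMem_tsupport hz
        simp [this]
    · exact ((hkerc.abs.mul continuous_const).integrable_of_hasCompactSupport
        (hker.abs.mul_right))
    · filter_upwards with z
      intro x hx
      have h1 : HasFDerivAt (fun x : V3 => f (x - z)) (fderiv ℝ f (x - z)) x := by
        have h2 : HasFDerivAt (fun x : V3 => x - z) (ContinuousLinearMap.id ℝ V3) x :=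
          (hasFDerivAt_id x).sub_const z
        have h3 := ((hf.differentiable (by simp) (x - z)).hasFDerivAt).comp x h2
        simpa [Function.comp_def] using h3
      simpa using h1.const_mul (mker φ ε z)
  have : mollify φ ε f = fun x => ∫ z, mker φ ε z * f (x - z) := funext (mollify_eq f)
  rw [this]
  exact key

lemma pd_mollify (hφ : ContDiff ℝ (⊤ : ℕ∞) φ) (hφc : HasCompactSupport φ) (hε : 0 < ε)
    {f : V3 → ℝ} (hf : ContDiff ℝ (⊤ : ℕ∞) f) (k : Fin 3) (x : V3) :
    pd (mollify φ ε f) k x = mollify φ ε (fun y => pd f k y) x := by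
  have h := hasFDerivAt_mollify hφ hφc hε hf x
  have hint : Integrable (fun z => mker φ ε z • fderiv ℝ f (x - z)) :=
    (((mker_contDiff (ε := ε) hφ).continuous).smul
      ((hf.continuous_fderiv (by simp)).comp (by continuity))).integrable_of_hasCompactSupport
      ((mker_hcs hφc hε).smul_right)
  rw [pd, h.fderiv, ContinuousLinearMap.integral_apply hint]
  rw [mollify_eq]
  congr 1

lemma diffAt_mollify (hφ : ContDiff ℝ (⊤ : ℕ∞) φ) (hφc : HasCompactSupport φ) (hε : 0 < ε)
    {f : V3 → ℝ} (hf : ContDiff ℝ (⊤ : ℕ∞) f) (x : V3) :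
    DifferentiableAt ℝ (mollify φ ε f) x :=
  (hasFDerivAt_mollify hφ hφc hε hf x).differentiableAt

lemma cross3_0 (a b : V3) : cross3 a b 0 = a 1 * b 2 - a 2 * b 1 := rfl
lemma cross3_1 (a b : V3) : cross3 a b 1 = a 2 * b 0 - a 0 * b 2 := rfl
lemma cross3_2 (a b : V3) : cross3 a b 2 = a 0 * b 1 - a 1 * b 0 := rfl
lemma curl3_0 (F x) : curl3 F x 0 = pd (fun y => F y 2) 1 x - pd (fun y => F y 1) 2 x := rfl
lemma curl3_1 (F x) : curl3 F x 1 = pd (fun y => F y 0) 2 x - pd (fun y => F y 2) 0 x := rfl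
lemma curl3_2 (F x) : curl3 F x 2 = pd (fun y => F y 1) 0 x - pd (fun y => F y 0) 1 x := rfl

section calc3
variable {u v : V3 → V3} {x : V3}

/-- div(u×v) = curl u · v − u · curl v -/
lemma div_cross (hu : ∀ i, DifferentiableAt ℝ (fun y => u y i) x)
    (hv : ∀ i, DifferentiableAt ℝ (fun y => v y i) x) :
    vdiv (fun y => cross3 (u y) (v y)) x
      = dot3 (curl3 u x) (v x) - dot3 (u x) (curl3 v x) := by
  have e0 : (fun y => cross3 (u y) (v y) 0) = fun y => u y 1 * v y 2 - u y 2 * v y 1 := rfl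
  have e1 : (fun y => cross3 (u y) (v y) 1) = fun y => u y 2 * v y 0 - u y 0 * v y 2 := rfl
  have e2 : (fun y => cross3 (u y) (v y) 2) = fun y => u y 0 * v y 1 - u y 1 * v y 0 := rfl
  unfold vdiv dot3
  rw [Fin.sum_univ_three, Fin.sum_univ_three, Fin.sum_univ_three]
  rw [show (fun y => cross3 (u y) (v y) 0) = _ from e0,
      show (fun y => cross3 (u y) (v y) 1) = _ from e1,
      show (fun y => cross3 (u y) (v y) 2) = _ from e2]
  rw [pd_sub ((hu 1).fun_mul (hv 2)) ((hu 2).fun_mul (hv 1)),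
      pd_sub ((hu 2).fun_mul (hv 0)) ((hu 0).fun_mul (hv 2)),
      pd_sub ((hu 0).fun_mul (hv 1)) ((hu 1).fun_mul (hv 0)),
      pd_mul (hu 1) (hv 2), pd_mul (hu 2) (hv 1), pd_mul (hu 2) (hv 0),
      pd_mul (hu 0) (hv 2), pd_mul (hu 0) (hv 1), pd_mul (hu 1) (hv 0)]
  rw [curl3_0, curl3_1, curl3_2, curl3_0, curl3_1, curl3_2]
  ring

/-- curl(u×v) = div(v⊗u) − div(u⊗v) componentwise -/
lemma curl_cross (hu : ∀ i y, DifferentiableAt ℝ (fun z => u z i) y)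
    (hv : ∀ i y, DifferentiableAt ℝ (fun z => v z i) y) (i : Fin 3) :
    curl3 (fun y => cross3 (u y) (v y)) x i = tdiv v u x i - tdiv u v x i := by
  have e0 : (fun y => cross3 (u y) (v y) 0) = fun y => u y 1 * v y 2 - u y 2 * v y 1 := rfl
  have e1 : (fun y => cross3 (u y) (v y) 1) = fun y => u y 2 * v y 0 - u y 0 * v y 2 := rfl
  have e2 : (fun y => cross3 (u y) (v y) 2) = fun y => u y 0 * v y 1 - u y 1 * v y 0 := rfl
  match i with
  | 0 =>
    simp only [curl3_0, tdiv, Fin.sum_univ_three, e0, e1, e2]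
    rw [pd_sub ((hu 0 x).fun_mul (hv 1 x)) ((hu 1 x).fun_mul (hv 0 x)),
        pd_sub ((hu 2 x).fun_mul (hv 0 x)) ((hu 0 x).fun_mul (hv 2 x))]
    simp only [pd_mul (hu 0 x) (hv 0 x), pd_mul (hu 0 x) (hv 1 x), pd_mul (hu 0 x) (hv 2 x), pd_mul (hu 1 x) (hv 0 x), pd_mul (hu 1 x) (hv 1 x), pd_mul (hu 1 x) (hv 2 x), pd_mul (hu 2 x) (hv 0 x), pd_mul (hu 2 x) (hv 1 x), pd_mul (hu 2 x) (hv 2 x), pd_mul (hv 0 x) (hu 0 x), pd_mul (hv 0 x) (hu 1 x), pd_mul (hv 0 x) (hu 2 x), pd_mul (hv 1 x) (hu 0 x), pd_mul (hv 1 x) (hu 1 x), pd_mul (hv 1 x) (hu 2 x), pd_mul (hv 2 x) (hu 0 x), pd_mul (hv 2 x) (hu 1 x), pd_mul (hv 2 x) (hu 2 x)]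
    ring
  | 1 =>
    simp only [curl3_1, tdiv, Fin.sum_univ_three, e0, e1, e2]
    rw [pd_sub ((hu 1 x).fun_mul (hv 2 x)) ((hu 2 x).fun_mul (hv 1 x)),
        pd_sub ((hu 0 x).fun_mul (hv 1 x)) ((hu 1 x).fun_mul (hv 0 x))]
    simp only [pd_mul (hu 0 x) (hv 0 x), pd_mul (hu 0 x) (hv 1 x), pd_mul (hu 0 x) (hv 2 x), pd_mul (hu 1 x) (hv 0 x), pd_mul (hu 1 x) (hv 1 x), pd_mul (hu 1 x) (hv 2 x), pd_mul (hu 2 x) (hv 0 x), pd_mul (hu 2 x) (hv 1 x), pd_mul (hu 2 x) (hv 2 x), pd_mul (hv 0 x) (hu 0 x), pd_mul (hv 0 x) (hu 1 x), pd_mul (hv 0 x) (hu 2 x), pd_mul (hv 1 x) (hu 0 x), pd_mul (hv 1 x) (hu 1 x), pd_mul (hv 1 x) (hu 2 x), pd_mul (hv 2 x) (hu 0 x), pd_mul (hv 2 x) (hu 1 x), pd_mul (hv 2 x) (hu 2 x)]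
    ring
  | 2 =>
    simp only [curl3_2, tdiv, Fin.sum_univ_three, e0, e1, e2]
    rw [pd_sub ((hu 2 x).fun_mul (hv 0 x)) ((hu 0 x).fun_mul (hv 2 x)),
        pd_sub ((hu 1 x).fun_mul (hv 2 x)) ((hu 2 x).fun_mul (hv 1 x))]
    simp only [pd_mul (hu 0 x) (hv 0 x), pd_mul (hu 0 x) (hv 1 x), pd_mul (hu 0 x) (hv 2 x), pd_mul (hu 1 x) (hv 0 x), pd_mul (hu 1 x) (hv 1 x), pd_mul (hu 1 x) (hv 2 x), pd_mul (hu 2 x) (hv 0 x), pd_mul (hu 2 x) (hv 1 x), pd_mul (hu 2 x) (hv 2 x), pd_mul (hv 0 x) (hu 0 x), pd_mul (hv 0 x) (hu 1 x), pd_mul (hv 0 x) (hu 2 x), pd_mul (hv 1 x) (hu 0 x), pd_mul (hv 1 x) (hu 1 x), pd_mul (hv 1 x) (hu 2 x), pd_mul (hv 2 x) (hu 0 x), pd_mul (hv 2 x) (hu 1 x), pd_mul (hv 2 x) (hu 2 x)]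
    ring
end calc3

section fieldids
variable {b : V3 → V3}

lemma contDiff_comp3 (hb : ContDiff ℝ (⊤ : ℕ∞) b) (i : Fin 3) : ContDiff ℝ (⊤ : ℕ∞) (fun y => b y i) :=
  (contDiff_pi.mp hb) i

lemma contDiff_curl3 (hb : ContDiff ℝ (⊤ : ℕ∞) b) (i : Fin 3) :
    ContDiff ℝ (⊤ : ℕ∞) (fun y => curl3 b y i) := by
  match i with
  | 0 => exact (contDiff_pd (contDiff_comp3 hb 2) 1).sub (contDiff_pd (contDiff_comp3 hb 1) 2)
  | 1 => exact (contDiff_pd (contDiff_comp3 hb 0) 2).sub (contDiff_pd (contDiff_comp3 hb 2) 0)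
  | 2 => exact (contDiff_pd (contDiff_comp3 hb 1) 0).sub (contDiff_pd (contDiff_comp3 hb 0) 1)

lemma contDiff_tdiv {u v : V3 → V3} (hu : ∀ i, ContDiff ℝ (⊤ : ℕ∞) (fun y => u y i))
    (hv : ∀ i, ContDiff ℝ (⊤ : ℕ∞) (fun y => v y i)) (i : Fin 3) :
    ContDiff ℝ (⊤ : ℕ∞) (fun y => tdiv u v y i) := by
  have h : (fun y => tdiv u v y i) = fun y => pd (fun z => u z 0 * v z i) 0 y
      + pd (fun z => u z 1 * v z i) 1 y + pd (fun z => u z 2 * v z i) 2 y := by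
    funext y; simp [tdiv, Fin.sum_univ_three]
  rw [h]
  exact ((contDiff_pd ((hu 0).mul (hv i)) 0).add (contDiff_pd ((hu 1).mul (hv i)) 1)).add
    (contDiff_pd ((hu 2).mul (hv i)) 2)

lemma pd_const_mul {f : V3 → ℝ} {x} (hf : DifferentiableAt ℝ f x) (c : ℝ) (k) :
    pd (fun y => c * f y) k x = c * pd f k x := by
  unfold pd
  rw [fderiv_const_mul hf]
  simp

lemma tdiv_bb_eq (hb : ContDiff ℝ (⊤ : ℕ∞) b) (hdiv : ∀ x, vdiv b x = 0) (y : V3) (i : Fin 3) :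
    tdiv b b y i = cross3 (curl3 b y) (b y) i
      + (1/2) * pd (fun z => b z 0 * b z 0 + b z 1 * b z 1 + b z 2 * b z 2) i y := by
  have hd : ∀ (k l : Fin 3), DifferentiableAt ℝ (fun z => b z k) y :=
    fun k _ => ((contDiff_comp3 hb k).differentiable (by simp)) y
  have hdd : ∀ (k : Fin 3), DifferentiableAt ℝ (fun z => b z k) y :=
    fun k => ((contDiff_comp3 hb k).differentiable (by simp)) y
  have hdivy : pd (fun z => b z 0) 0 y + pd (fun z => b z 1) 1 y + pd (fun z => b z 2) 2 y = 0 := by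
    have := hdiv y
    simpa [vdiv, Fin.sum_univ_three] using this
  have hgrad : pd (fun z => b z 0 * b z 0 + b z 1 * b z 1 + b z 2 * b z 2) i y
      = (pd (fun z => b z 0) i y * b y 0 + b y 0 * pd (fun z => b z 0) i y)
      + (pd (fun z => b z 1) i y * b y 1 + b y 1 * pd (fun z => b z 1) i y)
      + (pd (fun z => b z 2) i y * b y 2 + b y 2 * pd (fun z => b z 2) i y) := by
    rw [pd_add (((hdd 0).fun_mul (hdd 0)).fun_add ((hdd 1).fun_mul (hdd 1))) ((hdd 2).fun_mul (hdd 2)),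
        pd_add ((hdd 0).fun_mul (hdd 0)) ((hdd 1).fun_mul (hdd 1)),
        pd_mul (hdd 0) (hdd 0), pd_mul (hdd 1) (hdd 1), pd_mul (hdd 2) (hdd 2)]
  match i with
  | 0 =>
    simp only [tdiv, Fin.sum_univ_three, cross3_0, curl3_1, curl3_2]
    rw [hgrad, pd_mul (hdd 0) (hdd 0), pd_mul (hdd 1) (hdd 0), pd_mul (hdd 2) (hdd 0)]
    linear_combination (b y 0) * hdivy
  | 1 =>
    simp only [tdiv, Fin.sum_univ_three, cross3_1, curl3_2, curl3_0]
    rw [hgrad, pd_mul (hdd 0) (hdd 1), pd_mul (hdd 1) (hdd 1), pd_mul (hdd 2) (hdd 1)]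
    linear_combination (b y 1) * hdivy
  | 2 =>
    simp only [tdiv, Fin.sum_univ_three, cross3_2, curl3_0, curl3_1]
    rw [hgrad, pd_mul (hdd 0) (hdd 2), pd_mul (hdd 1) (hdd 2), pd_mul (hdd 2) (hdd 2)]
    linear_combination (b y 2) * hdivy

end fieldids

section curlA
variable {b : V3 → V3}

lemma contDiff_crossjb (hb : ContDiff ℝ (⊤ : ℕ∞) b) (i : Fin 3) :
    ContDiff ℝ (⊤ : ℕ∞) (fun y => cross3 (curl3 b y) (b y) i) := by
  match i with
  | 0 =>
    have h : (fun y => cross3 (curl3 b y) (b y) 0)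
        = fun y => curl3 b y 1 * b y 2 - curl3 b y 2 * b y 1 := rfl
    rw [h]
    exact ((contDiff_curl3 hb 1).mul (contDiff_comp3 hb 2)).sub
      ((contDiff_curl3 hb 2).mul (contDiff_comp3 hb 1))
  | 1 =>
    have h : (fun y => cross3 (curl3 b y) (b y) 1)
        = fun y => curl3 b y 2 * b y 0 - curl3 b y 0 * b y 2 := rfl
    rw [h]
    exact ((contDiff_curl3 hb 2).mul (contDiff_comp3 hb 0)).sub
      ((contDiff_curl3 hb 0).mul (contDiff_comp3 hb 2))
  | 2 =>
    have h : (fun y => cross3 (curl3 b y) (b y) 2)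
        = fun y => curl3 b y 0 * b y 1 - curl3 b y 1 * b y 0 := rfl
    rw [h]
    exact ((contDiff_curl3 hb 0).mul (contDiff_comp3 hb 1)).sub
      ((contDiff_curl3 hb 1).mul (contDiff_comp3 hb 0))

lemma curlA_eq (hb : ContDiff ℝ (⊤ : ℕ∞) b) (hdiv : ∀ x, vdiv b x = 0) (x : V3) (i : Fin 3) :
    curl3 (tdiv b b) x i
      = tdiv b (fun y => curl3 b y) x i - tdiv (fun y => curl3 b y) b x i := by
  set E := fun z : V3 => b z 0 * b z 0 + b z 1 * b z 1 + b z 2 * b z 2 with hEdef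
  have hE : ContDiff ℝ (⊤ : ℕ∞) E :=
    (((contDiff_comp3 hb 0).mul (contDiff_comp3 hb 0)).add
      ((contDiff_comp3 hb 1).mul (contDiff_comp3 hb 1))).add
      ((contDiff_comp3 hb 2).mul (contDiff_comp3 hb 2))
  have hcross := contDiff_crossjb hb
  have hcd : ∀ (i : Fin 3), DifferentiableAt ℝ (fun y => cross3 (curl3 b y) (b y) i) x :=
    fun i => (hcross i).differentiable (by simp) x
  have hgd : ∀ (i : Fin 3), DifferentiableAt ℝ (fun y => (1/2 : ℝ) * pd E i y) x :=
    fun i => ((contDiff_const.mul (contDiff_pd hE i)).differentiable (by simp)) x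
  have hpdEd : ∀ (i : Fin 3), DifferentiableAt ℝ (fun y => pd E i y) x :=
    fun i => ((contDiff_pd hE i).differentiable (by simp)) x
  have hud : ∀ (i : Fin 3) (y : V3), DifferentiableAt ℝ (fun z => curl3 b z i) y :=
    fun i y => (contDiff_curl3 hb i).differentiable (by simp) y
  have hvd : ∀ (i : Fin 3) (y : V3), DifferentiableAt ℝ (fun z => b z i) y :=
    fun i y => (contDiff_comp3 hb i).differentiable (by simp) y
  have c1 := tdiv_bb_eq hb hdiv
  have hcx := curl_cross (u := fun y => curl3 b y) (v := b) (x := x) hud hvd i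
  beta_reduce at hcx
  match i with
  | 0 =>
    rw [curl3_0] at hcx ⊢
    rw [pd_congr (fun y => c1 y 2) 1 x, pd_congr (fun y => c1 y 1) 2 x,
        pd_add (hcd 2) (hgd 2), pd_add (hcd 1) (hgd 1),
        pd_const_mul (hpdEd 2) (1/2) 1, pd_const_mul (hpdEd 1) (1/2) 2]
    have hcc := pd_comm hE 2 1 x
    linear_combination hcx + (1/2) * hcc
  | 1 =>
    rw [curl3_1] at hcx ⊢
    rw [pd_congr (fun y => c1 y 0) 2 x, pd_congr (fun y => c1 y 2) 0 x,
        pd_add (hcd 0) (hgd 0), pd_add (hcd 2) (hgd 2),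
        pd_const_mul (hpdEd 0) (1/2) 2, pd_const_mul (hpdEd 2) (1/2) 0]
    have hcc := pd_comm hE 0 2 x
    linear_combination hcx + (1/2) * hcc
  | 2 =>
    rw [curl3_2] at hcx ⊢
    rw [pd_congr (fun y => c1 y 1) 0 x, pd_congr (fun y => c1 y 0) 1 x,
        pd_add (hcd 1) (hgd 1), pd_add (hcd 0) (hgd 0),
        pd_const_mul (hpdEd 1) (1/2) 0, pd_const_mul (hpdEd 0) (1/2) 1]
    have hcc := pd_comm hE 1 0 x
    linear_combination hcx + (1/2) * hcc
end curlA

section molvcurl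
variable {φ : V3 → ℝ} {ε : ℝ}

lemma curl3_molv (hφ : ContDiff ℝ (⊤ : ℕ∞) φ) (hφc : HasCompactSupport φ) (hε : 0 < ε)
    {F : V3 → V3} (hF : ∀ i, ContDiff ℝ (⊤ : ℕ∞) (fun y => F y i)) (x : V3) (i : Fin 3) :
    curl3 (molv φ ε F) x i = mollify φ ε (fun y => curl3 F y i) x := by
  match i with
  | 0 =>
    rw [curl3_0]
    have h2 : (fun y => molv φ ε F y 2) = mollify φ ε (fun z => F z 2) := rfl
    have h1 : (fun y => molv φ ε F y 1) = mollify φ ε (fun z => F z 1) := rfl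
    rw [h2, h1, pd_mollify hφ hφc hε (hF 2) 1 x, pd_mollify hφ hφc hε (hF 1) 2 x,
        ← mollify_sub hφ hφc hε (contDiff_pd (hF 2) 1).continuous
          (contDiff_pd (hF 1) 2).continuous]
    exact mollify_congr (fun y => rfl) x
  | 1 =>
    rw [curl3_1]
    have h0 : (fun y => molv φ ε F y 0) = mollify φ ε (fun z => F z 0) := rfl
    have h2 : (fun y => molv φ ε F y 2) = mollify φ ε (fun z => F z 2) := rfl
    rw [h0, h2, pd_mollify hφ hφc hε (hF 0) 2 x, pd_mollify hφ hφc hε (hF 2) 0 x,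
        ← mollify_sub hφ hφc hε (contDiff_pd (hF 0) 2).continuous
          (contDiff_pd (hF 2) 0).continuous]
    exact mollify_congr (fun y => rfl) x
  | 2 =>
    rw [curl3_2]
    have h1 : (fun y => molv φ ε F y 1) = mollify φ ε (fun z => F z 1) := rfl
    have h0 : (fun y => molv φ ε F y 0) = mollify φ ε (fun z => F z 0) := rfl
    rw [h1, h0, pd_mollify hφ hφc hε (hF 1) 0 x, pd_mollify hφ hφc hε (hF 0) 1 x,
        ← mollify_sub hφ hφc hε (contDiff_pd (hF 1) 0).continuous
          (contDiff_pd (hF 0) 1).continuous]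
    exact mollify_congr (fun y => rfl) x
end molvcurl

/-- Key identity for the mollified Hall term (equation (key0) of the paper). -/
theorem hall_term_mollified_identity (φ : V3 → ℝ) (hφ : ContDiff ℝ (⊤ : ℕ∞) φ)
    (hφc : HasCompactSupport φ) (hφint : ∫ x : V3, φ x = 1)
    (b : V3 → V3) (hb : ContDiff ℝ (⊤ : ℕ∞) b) (hdiv : ∀ x, vdiv b x = 0)
    (j : V3 → V3) (hj : ∀ x, j x = curl3 b x)
    (ε : ℝ) (hε : 0 < ε) (x : V3) :
    dot3 (curl3 (fun y => cross3 (curl3 b y) (b y)) x) (molv φ ε b x)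
      + dot3 (molv φ ε (fun y => curl3 (fun z => cross3 (curl3 b z) (b z)) y) x) (b x)
    = (1/2) * (vdiv (fun y => cross3 (molv φ ε (tdiv b b) y) (b y)) x
        + vdiv (fun y => cross3 (tdiv b b y) (molv φ ε b y)) x)
      + (1/2) * (dot3 (tdiv b j x) (molv φ ε b x)
        + dot3 (tdiv b b x) (molv φ ε j x)
        + dot3 (molv φ ε (tdiv b j) x) (b x)
        + dot3 (molv φ ε (tdiv b b) x) (j x)
        - dot3 (molv φ ε (tdiv j b) x) (b x)
        - dot3 (tdiv j b x) (molv φ ε b x)) := by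
  have hjf : j = fun y => curl3 b y := funext hj
  subst hjf
  have hbi := contDiff_comp3 hb
  have hji := contDiff_curl3 hb
  have hAi : ∀ i, ContDiff ℝ (⊤ : ℕ∞) (fun y => tdiv b b y i) := contDiff_tdiv hbi hbi
  have htbj : ∀ i, ContDiff ℝ (⊤ : ℕ∞) (fun y => tdiv b (fun z => curl3 b z) y i) :=
    contDiff_tdiv hbi hji
  have htjb : ∀ i, ContDiff ℝ (⊤ : ℕ∞) (fun y => tdiv (fun z => curl3 b z) b y i) :=
    contDiff_tdiv hji hbi
  have hud : ∀ (i : Fin 3) (y : V3), DifferentiableAt ℝ (fun z => curl3 b z i) y :=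
    fun i y => (hji i).differentiable (by simp) y
  have hvd : ∀ (i : Fin 3) (y : V3), DifferentiableAt ℝ (fun z => b z i) y :=
    fun i y => (hbi i).differentiable (by simp) y
  -- curl of the Hall cross term, pointwise
  have hLHS1 : ∀ (y : V3) (i : Fin 3),
      curl3 (fun z => cross3 (curl3 b z) (b z)) y i
        = tdiv b (fun z => curl3 b z) y i - tdiv (fun z => curl3 b z) b y i := by
    intro y i
    have h := curl_cross (u := fun z => curl3 b z) (v := b) (x := y) hud hvd i
    beta_reduce at h
    exact h
  -- the two divergence-of-cross terms
  have hR1 : vdiv (fun y => cross3 (molv φ ε (tdiv b b) y) (b y)) x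
      = dot3 (curl3 (molv φ ε (tdiv b b)) x) (b x)
        - dot3 (molv φ ε (tdiv b b) x) (curl3 b x) :=
    div_cross (fun i => diffAt_mollify hφ hφc hε (hAi i) x)
      (fun i => hvd i x)
  have hR2 : vdiv (fun y => cross3 (tdiv b b y) (molv φ ε b y)) x
      = dot3 (curl3 (tdiv b b) x) (molv φ ε b x)
        - dot3 (tdiv b b x) (curl3 (molv φ ε b) x) :=
    div_cross (fun i => (hAi i).differentiable (by simp) x)
      (fun i => diffAt_mollify hφ hφc hε (hbi i) x)
  -- componentwise rewrites
  have hcurlmolA : ∀ i, curl3 (molv φ ε (tdiv b b)) x i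
      = mollify φ ε (fun y => tdiv b (fun z => curl3 b z) y i) x
        - mollify φ ε (fun y => tdiv (fun z => curl3 b z) b y i) x := by
    intro i
    rw [curl3_molv hφ hφc hε hAi x i,
        mollify_congr (fun y => curlA_eq hb hdiv y i) x,
        mollify_sub hφ hφc hε (htbj i).continuous (htjb i).continuous x]
  have hcurlA : ∀ i, curl3 (tdiv b b) x i
      = tdiv b (fun z => curl3 b z) x i - tdiv (fun z => curl3 b z) b x i :=
    curlA_eq hb hdiv x
  have hcurlmolb : ∀ i, curl3 (molv φ ε b) x i = mollify φ ε (fun y => curl3 b y i) x :=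
    curl3_molv hφ hφc hε hbi x
  have hmolLHS : ∀ i, mollify φ ε (fun y => curl3 (fun z => cross3 (curl3 b z) (b z)) y i) x
      = mollify φ ε (fun y => tdiv b (fun z => curl3 b z) y i) x
        - mollify φ ε (fun y => tdiv (fun z => curl3 b z) b y i) x := by
    intro i
    rw [mollify_congr (fun y => hLHS1 y i) x,
        mollify_sub hφ hφc hε (htbj i).continuous (htjb i).continuous x]
  rw [hR1, hR2]
  simp only [molv, dot3, Fin.sum_univ_three]
  -- (no beta redexes remain)
  rw [hLHS1 x 0, hLHS1 x 1, hLHS1 x 2,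
      hcurlmolA 0, hcurlmolA 1, hcurlmolA 2,
      hcurlA 0, hcurlA 1, hcurlA 2,
      hcurlmolb 0, hcurlmolb 1, hcurlmolb 2,
      hmolLHS 0, hmolLHS 1, hmolLHS 2]
  ring
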